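/- Let (R, Δ) be an odd form ring with hyperbolic pair η and let g ∈ U_{|η|'}. Then conjugation of a transvection by g satisfies ᵍ(T^η(u)) = T^η(γ(g)·π(u) ∔ u) for all u ∈ Δ_η^{|η|'}. -/

import Mathlib

open scoped commutatorElement in
/-- An odd form ring `(R, Δ)`: a non-unital ring `R` with involution `conj`,
a group `Δ` with a right action of the multiplicative semigroup `R^•` and
structure maps `phi : R → Δ`, `pi ρ : Δ → R` satisfying the odd form ring
axioms.  The group operation of `Δ` (written `∔` in the paper) is written
multiplicatively here. -/
structure OddForm (R Δ : Type*) [NonUnitalRing R] [Group Δ] where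
  conj : R → R
  conj_add : ∀ a b, conj (a + b) = conj a + conj b
  conj_mul : ∀ a b, conj (a * b) = conj b * conj a
  conj_conj : ∀ a, conj (conj a) = a
  act : Δ → R → Δ
  act_mul : ∀ u v a, act (u * v) a = act u a * act v a
  act_act : ∀ u a b, act (act u a) b = act u (a * b)
  phi : R → Δ
  pi : Δ → R
  rho : Δ → R
  pi_mul : ∀ u v, pi (u * v) = pi u + pi v
  pi_act : ∀ u a, pi (act u a) = pi u * a
  phi_add : ∀ a b, phi (a + b) = phi a * phi b
  phi_act : ∀ a b, act (phi b) a = phi (conj a * b * a)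
  rho_mul : ∀ u v, rho (u * v) = rho u - conj (pi u) * pi v + rho v
  rho_act : ∀ u a, rho (act u a) = conj a * rho u * a
  rho_pi : ∀ u, rho u + conj (rho u) + conj (pi u) * pi u = 0
  pi_phi : ∀ a, pi (phi a) = 0
  rho_phi : ∀ a, rho (phi a) = a - conj a
  comm_phi : ∀ u v, ⁅u, v⁆ = phi (-(conj (pi u) * pi v))
  phi_symm : ∀ a, conj a = a → phi a = 1
  act_addR : ∀ u a b, act u (a + b) = act u a * phi (conj b * rho u * a) * act u b

namespace OddForm

variable {R Δ : Type*} [NonUnitalRing R] [Group Δ]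

/-- The action of `a + 1` (an element of the unitalization `R ⋊ ℤ`) on `Δ`:
`u · (a + 1) = u·a ∔ φ(ρ(u) a) ∔ u`. -/
def actA (o : OddForm R Δ) (u : Δ) (a : R) : Δ :=
  o.act u a * o.phi (o.rho u * a) * u

/-- Membership in the unitary group `U(R, Δ)`: for `g = (β, γ)` with `α = β + 1`,
`α⁻¹ = conj α` (expressed without the unitalization) together with `π(γ) = β` and
`ρ(γ) = conj β`. -/
def umem (o : OddForm R Δ) (g : R × Δ) : Prop :=
  g.1 * o.conj g.1 + g.1 + o.conj g.1 = 0 ∧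
  o.conj g.1 * g.1 + o.conj g.1 + g.1 = 0 ∧
  o.pi g.2 = g.1 ∧ o.rho g.2 = o.conj g.1

/-- The group operation of the unitary group: `α(gg') = α(g) α(g')` and
`γ(gg') = γ(g) · α(g') ∔ γ(g')`. -/
def umul (o : OddForm R Δ) (g h : R × Δ) : R × Δ :=
  (g.1 * h.1 + g.1 + h.1, o.actA g.2 h.1 * h.2)

/-- The identity element of the unitary group. -/
def uone (o : OddForm R Δ) : R × Δ := ((0 : R), (1 : Δ))

/-- The inverse in the unitary group: `β(g⁻¹) = conj β(g)`,
`γ(g⁻¹) = (γ(g) · conj α(g))⁻¹`. -/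
def uinv (o : OddForm R Δ) (g : R × Δ) : R × Δ :=
  (o.conj g.1, (o.actA g.2 (o.conj g.1))⁻¹)

end OddForm

namespace OddForm

variable {R Δ : Type*} [NonUnitalRing R] [Group Δ]

/-- `η = (em, ep, qm, qp)` is a hyperbolic pair: `ep = e_η`, `em = e_{−η}` are
orthogonal idempotents with `em = conj ep`, and `qp = q_η`, `qm = q_{−η}` satisfy
`π(q_{±η}) = e_{±η}`, `ρ(q_{±η}) = 0`, `q_{±η} = q_{±η}·e_{±η}`. -/
def IsHPair (o : OddForm R Δ) (em ep : R) (qm qp : Δ) : Prop :=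
  ep * ep = ep ∧ em * em = em ∧ ep * em = 0 ∧ em * ep = 0 ∧
  o.conj ep = em ∧
  o.pi qp = ep ∧ o.pi qm = em ∧ o.rho qp = 0 ∧ o.rho qm = 0 ∧
  o.act qp ep = qp ∧ o.act qm em = qm

/-- Membership in `Δ_η^{|η|'} = {u ∈ Δ·e_η | e_{|η|} π(u) = 0}`. -/
def Dmem (o : OddForm R Δ) (em ep : R) (u : Δ) : Prop :=
  o.act u ep = u ∧ (ep + em) * o.pi u = 0

/-- The transvection `T^η(u)`, as an element of `R × Δ`:
`β = ρ(u) + π(u) − conj π(u)`,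
`γ = u ∔ q_{−η}·(ρ(u) − conj π(u)) ∸ φ(ρ(u) + π(u))`. -/
def Tv (o : OddForm R Δ) (qm : Δ) (u : Δ) : R × Δ :=
  (o.rho u + o.pi u - o.conj (o.pi u),
   u * o.act qm (o.rho u - o.conj (o.pi u)) * (o.phi (o.rho u + o.pi u))⁻¹)

/-- `a` and `b` are mutually inverse elements of the unital ring
`R_{ηη} = e_η R e_η` (with identity `ep`). -/
def IsInvPair (ep a b : R) : Prop :=
  a = ep * a * ep ∧ b = ep * b * ep ∧ a * b = ep ∧ b * a = ep

/-- The elementary dilation `D^η(a)` (with `b = a⁻¹` in `R_{ηη}`):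
`β = a + conj(a)⁻¹ − e_{|η|}`,
`γ = q_{−η}·(conj(a)⁻¹ − e_{−η}) ∔ q_η·(a − e_η) ∸ φ(a − e_η)`. -/
def Dil (o : OddForm R Δ) (em ep : R) (qm qp : Δ) (a b : R) : R × Δ :=
  (a + o.conj b - (ep + em),
   o.act qm (o.conj b - em) * o.act qp (a - ep) * (o.phi (a - ep))⁻¹)

/-- Membership in the maximal parabolic subgroup `P_η`. -/
def Pmem (o : OddForm R Δ) (em ep : R) (qm : Δ) (g : R × Δ) : Prop :=
  o.umem g ∧ g.1 * em = em * g.1 * em ∧ ep * g.1 = ep * g.1 * ep ∧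
  o.act g.2 em = o.act qm (g.1 * em)

/-- Membership in the smaller unitary group `U_{|η|'}`. -/
def Uprime (o : OddForm R Δ) (em ep : R) (g : R × Δ) : Prop :=
  o.umem g ∧ g.1 * (ep + em) = 0 ∧ (ep + em) * g.1 = 0 ∧ o.act g.2 (ep + em) = 1

end OddForm


namespace OddForm

variable {R Δ : Type*} [NonUnitalRing R] [Group Δ] (o : OddForm R Δ)

lemma conj_zero : o.conj 0 = 0 := by
  have h := o.conj_add 0 0
  rw [add_zero] at h
  exact (left_eq_add.mp h)

lemma conj_neg (a : R) : o.conj (-a) = -(o.conj a) := by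
  have h := o.conj_add a (-a)
  rw [add_neg_cancel, o.conj_zero] at h
  exact eq_neg_of_add_eq_zero_right h.symm

lemma conj_sub (a b : R) : o.conj (a - b) = o.conj a - o.conj b := by
  rw [sub_eq_add_neg, o.conj_add, o.conj_neg, sub_eq_add_neg]

lemma phi_zero : o.phi 0 = 1 := by
  have h := o.phi_add 0 0
  rw [add_zero] at h
  exact (left_eq_mul.mp h)

lemma phi_neg (a : R) : o.phi (-a) = (o.phi a)⁻¹ := by
  have h := o.phi_add a (-a)
  rw [add_neg_cancel, o.phi_zero] at h
  exact eq_inv_of_mul_eq_one_right h.symm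

lemma phi_mul_phi (a b : R) : o.phi a * o.phi b = o.phi (a + b) := (o.phi_add a b).symm

lemma pi_one : o.pi 1 = 0 := by
  have h := o.pi_mul 1 1
  rw [mul_one] at h
  exact (left_eq_add.mp h)

lemma rho_one : o.rho 1 = 0 := by
  have h := o.rho_mul 1 1
  rw [mul_one, o.pi_one, o.conj_zero, zero_mul, sub_zero] at h
  exact (left_eq_add.mp h)

lemma pi_inv (x : Δ) : o.pi x⁻¹ = -(o.pi x) := by
  have h := o.pi_mul x x⁻¹
  rw [mul_inv_cancel, o.pi_one] at h
  exact eq_neg_of_add_eq_zero_right h.symm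

lemma rho_inv (x : Δ) : o.rho x⁻¹ = o.conj (o.rho x) := by
  have h := o.rho_mul x x⁻¹
  rw [mul_inv_cancel, o.rho_one, o.pi_inv, mul_neg, sub_neg_eq_add] at h
  have h2 := o.rho_pi x
  have h3 : o.rho x⁻¹ = -(o.rho x + o.conj (o.pi x) * o.pi x) :=
    eq_neg_of_add_eq_zero_right h.symm
  have h4 : o.rho x + o.conj (o.pi x) * o.pi x + o.conj (o.rho x) = 0 := by
    rw [show o.rho x + o.conj (o.pi x) * o.pi x + o.conj (o.rho x)
        = o.rho x + o.conj (o.rho x) + o.conj (o.pi x) * o.pi x from by abel]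
    exact h2
  rw [h3]
  exact (eq_neg_of_add_eq_zero_right h4).symm

lemma phi_comm (a : R) (v : Δ) : o.phi a * v = v * o.phi a := by
  have h := o.comm_phi (o.phi a) v
  rw [o.pi_phi, o.conj_zero, zero_mul, neg_zero, o.phi_zero] at h
  exact commutatorElement_eq_one_iff_mul_comm.mp h

lemma swap (x y : Δ) : x * y = y * x * o.phi (-(o.conj (o.pi x) * o.pi y)) := by
  have h := o.comm_phi x y
  rw [commutatorElement_def] at h
  have h' : x * y = o.phi (-(o.conj (o.pi x) * o.pi y)) * (y * x) := by
    rw [← h]; group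
  rw [h', o.phi_comm, mul_assoc]

lemma act_one (a : R) : o.act 1 a = 1 := by
  have h := o.act_mul 1 1 a
  rw [mul_one] at h
  exact (left_eq_mul.mp h)

lemma act_inv (x : Δ) (a : R) : o.act x⁻¹ a = (o.act x a)⁻¹ := by
  have h := o.act_mul x x⁻¹ a
  rw [mul_inv_cancel, o.act_one] at h
  exact eq_inv_of_mul_eq_one_right h.symm

lemma act_zero (x : Δ) : o.act x 0 = 1 := by
  have h := o.act_addR x 0 0
  rw [add_zero, o.conj_zero, zero_mul, zero_mul, o.phi_zero, mul_one] at h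
  exact (left_eq_mul.mp h)

end OddForm

namespace OddForm

variable {R Δ : Type*} [NonUnitalRing R] [Group Δ]

private lemma aux (o : OddForm R Δ) (em ep b bc p pc r rc : R) (qm c u : Δ)
    (Hepep : ep * ep = ep) (Hemem : em * em = em)
    (Hepem : ep * em = 0) (Hemep : em * ep = 0)
    (Hcep : o.conj ep = em)
    (Hcb : o.conj b = bc) (Hcp : o.conj p = pc) (Hcr : o.conj r = rc)
    (Hbbc : b * bc + b + bc = 0) (Hbcb : bc * b + bc + b = 0)
    (Hbe : b * (ep + em) = 0) (Heb : (ep + em) * b = 0)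
    (Hpic : o.pi c = b) (Hrhoc : o.rho c = bc) (Hce : o.act c (ep + em) = 1)
    (Hpiqm : o.pi qm = em) (Hrhoqm : o.rho qm = 0) (Hqm : o.act qm em = qm)
    (Hu : o.act u ep = u) (Hpiu : o.pi u = p) (Hrhou : o.rho u = r)
    (Hep : (ep + em) * p = 0) :
    o.umul (o.umul (b, c) (o.Tv qm u)) (o.uinv (b, c)) = o.Tv qm (o.act c p * u) := by
  have nz : ∀ {x y : R}, x * y = 0 → ∀ z, x * (y * z) = 0 := by
    intro x y h z; rw [← mul_assoc, h, zero_mul]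
  have nr : ∀ {x y w : R}, x * y = w → ∀ z, x * (y * z) = w * z := by
    intro x y w h z; rw [← mul_assoc, h]
  -- conj facts
  have Hcem : o.conj em = ep := by rw [← Hcep, o.conj_conj]
  have Hcbc : o.conj bc = b := by rw [← Hcb, o.conj_conj]
  have Hcpc : o.conj pc = p := by rw [← Hcp, o.conj_conj]
  have Hcrc : o.conj rc = r := by rw [← Hcr, o.conj_conj]
  -- idempotent combinations
  have hepe : ep * (ep + em) = ep := by rw [mul_add, Hepep, Hepem, add_zero]
  have heep : (ep + em) * ep = ep := by rw [add_mul, Hepep, Hemep, add_zero]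
  have heme : em * (ep + em) = em := by rw [mul_add, Hemep, Hemem, zero_add]
  have heem : (ep + em) * em = em := by rw [add_mul, Hepem, Hemem, zero_add]
  -- b, bc annihilation
  have hbep : b * ep = 0 := by rw [← heep, ← mul_assoc, Hbe, zero_mul]
  have hbem : b * em = 0 := by rw [← heem, ← mul_assoc, Hbe, zero_mul]
  have hepb : ep * b = 0 := by rw [← hepe, mul_assoc, Heb, mul_zero]
  have hemb : em * b = 0 := by rw [← heme, mul_assoc, Heb, mul_zero]
  have Hbce : bc * (ep + em) = 0 := by
    have h := congrArg o.conj Heb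
    rw [o.conj_mul, o.conj_add, Hcep, Hcem, Hcb, o.conj_zero] at h
    rw [show ep + em = em + ep from by abel]; exact h
  have Hebc : (ep + em) * bc = 0 := by
    have h := congrArg o.conj Hbe
    rw [o.conj_mul, o.conj_add, Hcep, Hcem, Hcb, o.conj_zero] at h
    rw [show ep + em = em + ep from by abel]; exact h
  have hbcep : bc * ep = 0 := by rw [← heep, ← mul_assoc, Hbce, zero_mul]
  have hbcem : bc * em = 0 := by rw [← heem, ← mul_assoc, Hbce, zero_mul]
  have hepbc : ep * bc = 0 := by rw [← hepe, mul_assoc, Hebc, mul_zero]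
  have hembc : em * bc = 0 := by rw [← heme, mul_assoc, Hebc, mul_zero]
  -- p, pc, r, rc module facts
  have hpep : p * ep = p := by
    have h := congrArg o.pi Hu; rw [o.pi_act, Hpiu] at h; exact h
  have hpem : p * em = 0 := by rw [← hpep, mul_assoc, Hepem, mul_zero]
  have hpe : p * (ep + em) = p := by rw [mul_add, hpep, hpem, add_zero]
  have hru : em * r * ep = r := by
    have h := congrArg o.rho Hu; rw [o.rho_act, Hrhou, Hcep] at h; exact h
  have hrep : r * ep = r := by
    conv_lhs => rw [← hru]
    rw [mul_assoc (em * r), Hepep]; exact hru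
  have hemr : em * r = r := by
    conv_lhs => rw [← hru]
    rw [← mul_assoc, ← mul_assoc, Hemem]; exact hru
  have hepr : ep * r = 0 := by rw [← hemr, ← mul_assoc, Hepem, zero_mul]
  have hrem : r * em = 0 := by rw [← hrep, mul_assoc, Hepem, mul_zero]
  have her : (ep + em) * r = r := by rw [add_mul, hepr, hemr, zero_add]
  have hre : r * (ep + em) = r := by rw [mul_add, hrep, hrem, add_zero]
  have hpce : pc * (ep + em) = 0 := by
    have h := congrArg o.conj Hep
    rw [o.conj_mul, o.conj_add, Hcep, Hcem, Hcp, o.conj_zero] at h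
    rw [show ep + em = em + ep from by abel]; exact h
  have hempc : em * pc = pc := by
    have h := congrArg o.conj hpep
    rw [o.conj_mul, Hcep, Hcp] at h; exact h
  have heppc : ep * pc = 0 := by rw [← hempc, ← mul_assoc, Hepem, zero_mul]
  have hepc : (ep + em) * pc = pc := by rw [add_mul, heppc, hempc, zero_add]
  have hemrc : em * rc = rc := by
    have h := congrArg o.conj hrep
    rw [o.conj_mul, Hcep, Hcr] at h; exact h
  have hrcep : rc * ep = rc := by
    have h := congrArg o.conj hemr
    rw [o.conj_mul, Hcem, Hcr] at h; exact h
  have heprc : ep * rc = 0 := by rw [← hemrc, ← mul_assoc, Hepem, zero_mul]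
  have hrcem : rc * em = 0 := by rw [← hrcep, mul_assoc, Hepem, mul_zero]
  -- mixed zero products
  have hbr : b * r = 0 := by rw [← hemr, ← mul_assoc, hbem, zero_mul]
  have hrb : r * b = 0 := by rw [← hrep, mul_assoc, hepb, mul_zero]
  have hbcr : bc * r = 0 := by rw [← hemr, ← mul_assoc, hbcem, zero_mul]
  have hrbc : r * bc = 0 := by rw [← hrep, mul_assoc, hepbc, mul_zero]
  have hpbc : p * bc = 0 := by rw [← hpep, mul_assoc, hepbc, mul_zero]
  have hpb : p * b = 0 := by rw [← hpep, mul_assoc, hepb, mul_zero]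
  have hbpc : b * pc = 0 := by rw [← hempc, ← mul_assoc, hbem, zero_mul]
  have hbcpc : bc * pc = 0 := by rw [← hempc, ← mul_assoc, hbcem, zero_mul]
  have hrcb : rc * b = 0 := by rw [← hrcep, mul_assoc, hepb, mul_zero]
  have hrcbc : rc * bc = 0 := by rw [← hrcep, mul_assoc, hepbc, mul_zero]
  have hbrc : b * rc = 0 := by rw [← hemrc, ← mul_assoc, hbem, zero_mul]
  have hbcrc : bc * rc = 0 := by rw [← hemrc, ← mul_assoc, hbcem, zero_mul]
  have hpp : p * p = 0 := by
    calc p * p = p * (ep + em) * p := by rw [hpe]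
      _ = p * ((ep + em) * p) := by rw [mul_assoc]
      _ = 0 := by rw [Hep, mul_zero]
  have hpcpc : pc * pc = 0 := by
    calc pc * pc = pc * ((ep + em) * pc) := by rw [hepc]
      _ = pc * (ep + em) * pc := by rw [mul_assoc]
      _ = 0 := by rw [hpce, zero_mul]
  have hepp : ep * p = -(em * p) := by
    have h2 : ep * p + em * p = 0 := by rw [← add_mul]; exact Hep
    exact eq_neg_of_add_eq_zero_left h2
  have hpcep : pc * ep = -(pc * em) := by
    have h2 : pc * ep + pc * em = 0 := by rw [← mul_add]; exact hpce
    exact eq_neg_of_add_eq_zero_left h2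
  have hpr : p * r = 0 := by rw [← hpep, mul_assoc, hepr, mul_zero]
  have hprc : p * rc = 0 := by rw [← hpep, mul_assoc, heprc, mul_zero]
  have hppc : p * pc = 0 := by rw [← hpep, mul_assoc, heppc, mul_zero]
  have hrr : r * r = 0 := by
    calc r * r = r * (ep * r) := by rw [← mul_assoc, hrep]
      _ = 0 := by rw [hepr, mul_zero]
  have hrrc : r * rc = 0 := by rw [← hrep, mul_assoc, heprc, mul_zero]
  have hrpc : r * pc = 0 := by rw [← hrep, mul_assoc, heppc, mul_zero]
  have hrcr : rc * r = 0 := by rw [← hrcep, mul_assoc, hepr, mul_zero]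
  have hrcrc : rc * rc = 0 := by
    calc rc * rc = rc * (ep * rc) := by rw [← mul_assoc, hrcep]
      _ = 0 := by rw [heprc, mul_zero]
  have hrcpc : rc * pc = 0 := by rw [← hrcep, mul_assoc, heppc, mul_zero]
  have Hbbc' : b * bc = -b - bc := by
    have h2 : b * bc + (b + bc) = 0 := by rw [← add_assoc]; exact Hbbc
    calc b * bc = -(b + bc) := eq_neg_of_add_eq_zero_left h2
      _ = -b - bc := by abel
  have Hbcb' : bc * b = -bc - b := by
    have h2 : bc * b + (bc + b) = 0 := by rw [← add_assoc]; exact Hbcb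
    calc bc * b = -(bc + b) := eq_neg_of_add_eq_zero_left h2
      _ = -bc - b := by abel
  -- Δ-level facts
  have hQadd : ∀ x y, o.act qm (x + y) = o.act qm x * o.act qm y := by
    intro x y
    rw [o.act_addR, Hrhoqm, mul_zero, zero_mul, o.phi_zero, mul_one]
  have hAe : ∀ x, o.act c ((ep + em) * x) = 1 := by
    intro x; rw [← o.act_act, Hce, o.act_one]
  have hUep : ∀ x, o.act u (ep * x) = o.act u x := by
    intro x; rw [← o.act_act, Hu]
  have hubc : o.act u bc = 1 := by rw [← hUep bc, hepbc, o.act_zero]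
  -- pi and rho of v
  have hπv : o.pi (o.act c p * u) = b * p + p := by
    rw [o.pi_mul, o.pi_act, Hpic, Hpiu]
  have hρv : o.rho (o.act c p * u) = r := by
    rw [o.rho_mul, o.rho_act, o.pi_act, o.conj_mul, Hpic, Hrhoc, Hrhou, Hpiu, Hcp, Hcb]
    abel
  have hconjv : o.conj (b * p + p) = pc * bc + pc := by
    rw [o.conj_add, o.conj_mul, Hcb, Hcp]
  have e1 : o.act c (r + p - pc) = o.act c p := by
    rw [show r + p - pc = (r - pc) + p from by abel, o.act_addR, Hrhoc, Hcp]
    rw [show r - pc = (ep + em) * (r - pc) from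
      ((by rw [mul_sub, her, hepc]) : (ep + em) * (r - pc) = r - pc).symm]
    rw [hAe, one_mul]
    rw [show pc * bc * ((ep + em) * (r - pc)) = 0 from by
      rw [mul_assoc, nz Hbce, mul_zero], o.phi_zero, one_mul]
  -- the equality criterion
  have key : ∀ x y : Δ, o.rho x = o.rho y → (∃ d, x * o.phi d = y) → x = y := by
    rintro x y hρ ⟨d, rfl⟩
    have h1 : o.rho (x * o.phi d) = o.rho x + (d - o.conj d) := by
      rw [o.rho_mul, o.pi_phi, mul_zero, sub_zero, o.rho_phi]
    rw [h1] at hρ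
    have h3 : d - o.conj d = 0 := (left_eq_add.mp hρ)
    have h2 : o.conj d = d := (sub_eq_zero.mp h3).symm
    rw [o.phi_symm d h2, mul_one]
  -- unfold the goal
  simp only [OddForm.umul, OddForm.uinv, OddForm.Tv, OddForm.actA, Hpiu, Hrhou, Hcp, Hcb,
    hπv, hρv, hconjv]
  refine Prod.ext_iff.mpr ⟨?_, ?_⟩
  · -- first components
    simp only [mul_add, add_mul, mul_sub, sub_mul, neg_mul, mul_neg, neg_neg, mul_assoc,
      mul_zero, zero_mul, add_zero, zero_add, neg_zero, sub_zero, zero_sub,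
      Hbbc', Hbcb', nr Hbbc', nr Hbcb',
      hbr, hrb, hbcr, hrbc, hpbc, hpb, hbpc, hbcpc, hrcb, hrcbc, hbrc, hbcrc, hpp, hpcpc,
      nz hbr, nz hrb, nz hbcr, nz hrbc, nz hpbc, nz hpb, nz hbpc, nz hbcpc, nz hrcb,
      nz hrcbc, nz hbrc, nz hbcrc, nz hpp, nz hpcpc,
      hbep, hbem, hepb, hemb, hbcep, hbcem, hepbc, hembc,
      nz hbep, nz hbem, nz hepb, nz hemb, nz hbcep, nz hbcem, nz hepbc, nz hembc,
      hpep, hpem, hemr, hrep, hepr, hrem, hempc, heppc, hemrc, hrcep, heprc, hrcem,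
      nr hpep, nz hpem, nr hemr, nr hrep, nz hepr, nz hrem, nr hempc, nz heppc,
      nr hemrc, nr hrcep, nz heprc, nz hrcem, hepp, nr hepp, hpcep, nr hpcep,
      nr Hepep, nr Hemem, nz Hepem, nz Hemep, Hepep, Hemem, Hepem, Hemep]
    abel
  · -- second components
    apply key
    · -- rho equality
      simp only [o.pi_mul, o.pi_act, o.pi_phi, o.pi_inv, o.pi_one, o.rho_mul, o.rho_act,
        o.rho_phi, o.rho_inv, o.rho_one, o.conj_add, o.conj_sub, o.conj_mul, o.conj_neg,
        o.conj_zero, Hcb, Hcbc, Hcp, Hcpc, Hcr, Hcrc, Hcep, Hcem, Hpic, Hrhoc, Hpiqm,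
        Hrhoqm, Hpiu, Hrhou]
      simp only [mul_add, add_mul, mul_sub, sub_mul, neg_mul, mul_neg, neg_neg, mul_assoc,
        mul_zero, zero_mul, add_zero, zero_add, neg_zero, sub_zero, zero_sub,
        Hbbc', Hbcb', nr Hbbc', nr Hbcb',
        hbr, hrb, hbcr, hrbc, hpbc, hpb, hbpc, hbcpc, hrcb, hrcbc, hbrc, hbcrc, hpp, hpcpc,
        nz hbr, nz hrb, nz hbcr, nz hrbc, nz hpbc, nz hpb, nz hbpc, nz hbcpc, nz hrcb,
        nz hrcbc, nz hbrc, nz hbcrc, nz hpp, nz hpcpc,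
        hbep, hbem, hepb, hemb, hbcep, hbcem, hepbc, hembc,
        nz hbep, nz hbem, nz hepb, nz hemb, nz hbcep, nz hbcem, nz hepbc, nz hembc,
        hpep, hpem, hemr, hrep, hepr, hrem, hempc, heppc, hemrc, hrcep, heprc, hrcem,
        nr hpep, nz hpem, nr hemr, nr hrep, nz hepr, nz hrem, nr hempc, nz heppc,
        nr hemrc, nr hrcep, nz heprc, nz hrcem, hepp, nr hepp, hpcep, nr hpcep,
        hpr, hprc, hppc, hrr, hrrc, hrpc, hrcr, hrcrc, hrcpc,
        nz hpr, nz hprc, nz hppc, nz hrr, nz hrrc, nz hrpc, nz hrcr, nz hrcrc, nz hrcpc,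
        nr Hepep, nr Hemem, nz Hepem, nz Hemep, Hepep, Hemem, Hepem, Hemep]
      abel
    · -- quotient / phi part
      let Z : Subgroup Δ :=
        { carrier := Set.range o.phi
          one_mem' := ⟨0, o.phi_zero⟩
          mul_mem' := by rintro x y ⟨a, rfl⟩ ⟨a', rfl⟩; exact ⟨a + a', o.phi_add a a'⟩
          inv_mem' := by rintro x ⟨a, rfl⟩; exact ⟨-a, o.phi_neg a⟩ }
      haveI hZN : Z.Normal := by
        constructor
        rintro x ⟨a, rfl⟩ g
        refine ⟨a, ?_⟩
        rw [← o.phi_comm a g, mul_assoc, mul_inv_cancel, mul_one]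
      letI : CommGroup (Δ ⧸ Z) :=
        { (inferInstance : Group (Δ ⧸ Z)) with
          mul_comm := by
            intro x y
            refine QuotientGroup.induction_on x fun a => QuotientGroup.induction_on y fun b' => ?_
            rw [← QuotientGroup.mk_mul, ← QuotientGroup.mk_mul, o.swap a b',
              QuotientGroup.mk_mul, QuotientGroup.mk_mul,
              show ((o.phi (-(o.conj (o.pi a) * o.pi b')) : Δ) : Δ ⧸ Z) = 1 from
                (QuotientGroup.eq_one_iff _).mpr ⟨_, rfl⟩, mul_one] }
      have hfphi : ∀ a : R, ((o.phi a : Δ) : Δ ⧸ Z) = 1 := fun a =>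
        (QuotientGroup.eq_one_iff _).mpr ⟨a, rfl⟩
      have bridge : ∀ x y : Δ,
          (QuotientGroup.mk' Z) x = (QuotientGroup.mk' Z) y → ∃ d, x * o.phi d = y := by
        intro x y hq
        obtain ⟨z, hz, hzz⟩ := (QuotientGroup.mk'_eq_mk' Z).mp hq
        obtain ⟨d, rfl⟩ := hz
        exact ⟨d, hzz⟩
      apply bridge
      rw [e1, show r - (pc * bc + pc) = -(pc * bc) + (r - pc) from by abel, hQadd]
      simp only [map_mul, map_inv, QuotientGroup.mk'_apply, o.act_mul, o.act_act, o.act_inv,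
        o.phi_act, hubc, hpbc, hrbc, sub_mul, zero_sub, o.act_zero, o.act_one, hfphi,
        one_mul, mul_one, inv_one, mul_inv_rev]
      apply Additive.ofMul.injective
      simp only [ofMul_mul, ofMul_inv]
      abel

end OddForm

open OddForm in
/-- For an odd form ring `(R, Δ)` with hyperbolic pair `η` and `g ∈ U_{|η|'}`,
conjugation of a transvection by `g` satisfies
`ᵍ(T^η(u)) = T^η(γ(g)·π(u) ∔ u)` for all `u ∈ Δ_η^{|η|'}`. -/
theorem transvection_conjugation {R Δ : Type*} [NonUnitalRing R] [Group Δ]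
    (o : OddForm R Δ) (em ep : R) (qm qp : Δ) (hη : IsHPair o em ep qm qp)
    (g : R × Δ) (hg : Uprime o em ep g) :
    ∀ u : Δ, Dmem o em ep u →
      o.umul (o.umul g (Tv o qm u)) (o.uinv g) =
        Tv o qm (o.act g.2 (o.pi u) * u) := by
  obtain ⟨hepep, hemem, hepem, hemep, hcep, hpiqp, hpiqm, hrhoqp, hrhoqm, hactqp, hactqm⟩ := hη
  obtain ⟨⟨hu1, hu2, hu3, hu4⟩, hbe, heb, hce⟩ := hg
  intro u hu
  obtain ⟨huep, hup⟩ := hu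
  exact OddForm.aux o em ep g.1 (o.conj g.1) (o.pi u) (o.conj (o.pi u)) (o.rho u)
    (o.conj (o.rho u)) qm g.2 u hepep hemem hepem hemep hcep rfl rfl rfl hu1 hu2 hbe heb
    hu3 hu4 hce hpiqm hrhoqm hactqm huep rfl rfl hup
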